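/- Let Y be a real random variable that is sub-Weibull with tail parameter θ ≥ 1 and scale L > 0, i.e. P(|Y| > x) ≤ 2·exp(−(x/L)^{1/θ}) for all x ≥ 0. Then all moments of Y are finite, and there exists a constant Δ > 0 (depending only on θ and L) such that the k-th cumulant of Y satisfies |κ_k(Y)| ≤ Δ^{k−2}·(k!)^θ for all k ≥ 3. -/

import Mathlib

open MeasureTheory Finset

/-- The `k`-th classical cumulant of the random variable `Y`, defined via the sum
over set partitions `P` of `{1,…,k}`:
`κ_k(Y) = Σ_P (−1)^{#P−1} (#P−1)! ∏_{J ∈ P} E[Y^{#J}]`. -/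
noncomputable def cumulantK {Ω : Type*} [MeasurableSpace Ω] (μ : Measure Ω)
    (k : ℕ) (Y : Ω → ℝ) : ℝ :=
  ∑ P ∈ ((Finset.univ : Finset (Fin k)).powerset.powerset.filter fun P =>
      (∀ s ∈ P, s.Nonempty) ∧ (∀ s ∈ P, ∀ t ∈ P, s ≠ t → Disjoint s t) ∧
        P.sup id = Finset.univ),
    (-1 : ℝ) ^ (P.card - 1) * (Nat.factorial (P.card - 1) : ℝ) *
      ∏ J ∈ P, ∫ ω, (Y ω) ^ J.card ∂μ

section Combinatorics
variable {α : Type*} [DecidableEq α]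

variable {α : Type*} [DecidableEq α]

def myParts (s : Finset α) : Finset (Finset (Finset α)) :=
  s.powerset.powerset.filter fun P =>
    (∀ b ∈ P, b.Nonempty) ∧ (∀ b ∈ P, ∀ c ∈ P, b ≠ c → Disjoint b c) ∧ P.sup id = s

lemma mem_myParts {s : Finset α} {P : Finset (Finset α)} :
    P ∈ myParts s ↔
      (∀ b ∈ P, b.Nonempty) ∧ (∀ b ∈ P, ∀ c ∈ P, b ≠ c → Disjoint b c) ∧ P.sup id = s := by
  constructor
  · intro h; exact (Finset.mem_filter.1 h).2
  · intro h
    refine Finset.mem_filter.2 ⟨?_, h⟩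
    refine Finset.mem_powerset.2 fun b hb => Finset.mem_powerset.2 ?_
    have hb2 : id b ≤ P.sup id := Finset.le_sup hb
    rw [h.2.2] at hb2; exact hb2

lemma myParts_empty : myParts (∅ : Finset α) = {∅} := by
  ext P
  simp only [mem_myParts, Finset.mem_singleton]
  constructor
  · rintro ⟨h1, _, h3⟩
    rcases Finset.eq_empty_or_nonempty P with rfl | ⟨b, hb⟩
    · rfl
    · have hb2 : id b ≤ P.sup id := Finset.le_sup hb
      rw [h3] at hb2
      exact absurd (Finset.subset_empty.1 hb2) (h1 b hb).ne_empty
  · rintro rfl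
    exact ⟨by simp, by simp, by simp⟩

def blockOf (a : α) (P : Finset (Finset α)) : Finset α :=
  P.sup fun b => if a ∈ b then b else ∅

lemma blockOf_eq {a : α} {P : Finset (Finset α)}
    (hdisj : ∀ b ∈ P, ∀ c ∈ P, b ≠ c → Disjoint b c)
    {B : Finset α} (hB : B ∈ P) (haB : a ∈ B) : blockOf a P = B := by
  apply le_antisymm
  · refine Finset.sup_le fun b hb => ?_
    by_cases hab : a ∈ b
    · simp only [hab, if_pos]
      rcases eq_or_ne b B with rfl | hne
      · exact le_rfl
      · exact absurd (hdisj b hb B hB hne) (Finset.not_disjoint_iff.2 ⟨a, hab, haB⟩)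
    · simp [hab]
  · have h := Finset.le_sup (f := fun b => if a ∈ b then b else ∅) hB
    simp only [if_pos haB] at h
    exact h

lemma exists_block {s : Finset α} {P : Finset (Finset α)} (hP : P ∈ myParts s)
    {a : α} (ha : a ∈ s) : ∃ B ∈ P, a ∈ B := by
  have h := (mem_myParts.1 hP).2.2
  rw [← h] at ha
  simpa using Finset.mem_sup.1 ha

lemma block_subset {s : Finset α} {P : Finset (Finset α)} (hP : P ∈ myParts s)
    {b : Finset α} (hb : b ∈ P) : b ⊆ s := by
  have h := Finset.le_sup (f := id) hb
  rw [(mem_myParts.1 hP).2.2] at h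
  exact h

lemma sum_myParts_insert (a : α) (s : Finset α) (ha : a ∉ s) (j : ℕ) :
    ∑ P ∈ myParts (insert a s),
        ((P.card + j).factorial * ∏ J ∈ P, (J.card).factorial)
      = ∑ t ∈ s.powerset, (t.card + 1).factorial *
          ∑ Q ∈ myParts (s \ t),
            ((Q.card + (j+1)).factorial * ∏ J ∈ Q, (J.card).factorial) := by
  have hmaps : ∀ P ∈ myParts (insert a s), (blockOf a P).erase a ∈ s.powerset := by
    intro P hP
    obtain ⟨B, hBP, haB⟩ := exists_block hP (mem_insert_self a s)
    rw [blockOf_eq (mem_myParts.1 hP).2.1 hBP haB]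
    refine Finset.mem_powerset.2 fun x hx => ?_
    have hxB : x ∈ B := Finset.mem_of_mem_erase hx
    have hxa : x ≠ a := Finset.ne_of_mem_erase hx
    have := block_subset hP hBP hxB
    rcases Finset.mem_insert.1 this with h | h
    · exact absurd h hxa
    · exact h
  rw [← Finset.sum_fiberwise_of_maps_to hmaps]
  refine Finset.sum_congr rfl fun t ht => ?_
  have hts : t ⊆ s := Finset.mem_powerset.1 ht
  have hat : a ∉ t := fun h => ha (hts h)
  rw [Finset.mul_sum]
  refine Finset.sum_nbij' (fun P => P.erase (insert a t))
    (fun Q => insert (insert a t) Q) ?_ ?_ ?_ ?_ ?_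
  · -- forward membership
    intro P hP
    obtain ⟨hPmem, hPt⟩ := Finset.mem_filter.1 hP
    obtain ⟨hne, hdisj, hsup⟩ := mem_myParts.1 hPmem
    obtain ⟨B, hBP, haB⟩ := exists_block hPmem (mem_insert_self a s)
    have hBeq : blockOf a P = B := blockOf_eq hdisj hBP haB
    have hBt : B = insert a t := by
      rw [← hPt, hBeq, Finset.insert_erase haB]
    rw [← hBt]
    refine mem_myParts.2 ⟨fun b hb => hne b (Finset.mem_of_mem_erase hb),
      fun b hb c hc hbc => hdisj b (Finset.mem_of_mem_erase hb) c (Finset.mem_of_mem_erase hc) hbc,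
      ?_⟩
    ext x
    simp only [Finset.mem_sup, Finset.mem_sdiff, id_eq]
    constructor
    · rintro ⟨b, hb, hx⟩
      have hbP : b ∈ P := Finset.mem_of_mem_erase hb
      have hbB : b ≠ B := Finset.ne_of_mem_erase hb
      have hdisjbB : Disjoint b B := hdisj b hbP B hBP hbB
      have hxs' : x ∈ insert a s := block_subset hPmem hbP hx
      have hxa : x ≠ a := by
        rintro rfl
        exact (Finset.disjoint_left.1 hdisjbB) hx haB
      have hxs : x ∈ s := by
        rcases Finset.mem_insert.1 hxs' with h | h
        · exact absurd h hxa
        · exact h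
      refine ⟨hxs, fun hxt => ?_⟩
      have hxB : x ∈ B := by rw [hBt]; exact Finset.mem_insert_of_mem hxt
      exact (Finset.disjoint_left.1 hdisjbB) hx hxB
    · rintro ⟨hxs, hxt⟩
      have hx' : x ∈ P.sup id := by rw [hsup]; exact Finset.mem_insert_of_mem hxs
      obtain ⟨b, hbP, hxb⟩ := by simpa using Finset.mem_sup.1 hx'
      have hbB : b ≠ B := by
        rintro rfl
        rw [hBt] at hxb
        rcases Finset.mem_insert.1 hxb with h | h
        · exact ha (h ▸ hxs)
        · exact hxt h
      exact ⟨b, Finset.mem_erase.2 ⟨hbB, hbP⟩, hxb⟩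
  · -- backward membership
    intro Q hQ
    obtain ⟨hne', hdisj', hsup'⟩ := mem_myParts.1 hQ
    have hQsub : ∀ q ∈ Q, q ⊆ s \ t := fun q hq => block_subset hQ hq
    have hB'Q : insert a t ∉ Q := by
      intro h
      have := hQsub _ h (Finset.mem_insert_self a t)
      exact ha (Finset.mem_sdiff.1 this).1
    have hdisjB' : ∀ q ∈ Q, Disjoint (insert a t) q := by
      intro q hq
      rw [Finset.disjoint_left]
      intro x hx hxq
      have hxst := hQsub q hq hxq
      rcases Finset.mem_insert.1 hx with rfl | hxt
      · exact ha (Finset.mem_sdiff.1 hxst).1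
      · exact (Finset.mem_sdiff.1 hxst).2 hxt
    have hdisjAll : ∀ b ∈ insert (insert a t) Q, ∀ c ∈ insert (insert a t) Q,
        b ≠ c → Disjoint b c := by
      intro b hb c hc hbc
      rcases Finset.mem_insert.1 hb with rfl | hbQ
      · rcases Finset.mem_insert.1 hc with rfl | hcQ
        · exact absurd rfl hbc
        · exact hdisjB' c hcQ
      · rcases Finset.mem_insert.1 hc with rfl | hcQ
        · exact (hdisjB' b hbQ).symm
        · exact hdisj' b hbQ c hcQ hbc
    have hmem : insert (insert a t) Q ∈ myParts (insert a s) := by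
      refine mem_myParts.2 ⟨?_, hdisjAll, ?_⟩
      · intro b hb
        rcases Finset.mem_insert.1 hb with rfl | hbQ
        · exact Finset.insert_nonempty a t
        · exact hne' b hbQ
      · rw [Finset.sup_insert, hsup']
        show insert a t ∪ (s \ t) = insert a s
        rw [Finset.insert_union, Finset.union_sdiff_of_subset hts]
    refine Finset.mem_filter.2 ⟨hmem, ?_⟩
    rw [blockOf_eq hdisjAll (Finset.mem_insert_self _ _) (Finset.mem_insert_self a t),
      Finset.erase_insert hat]
  · -- left inverse
    intro P hP
    obtain ⟨hPmem, hPt⟩ := Finset.mem_filter.1 hP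
    obtain ⟨B, hBP, haB⟩ := exists_block hPmem (mem_insert_self a s)
    have hBeq : blockOf a P = B := blockOf_eq (mem_myParts.1 hPmem).2.1 hBP haB
    have hBt : B = insert a t := by
      rw [← hPt, hBeq, Finset.insert_erase haB]
    show insert (insert a t) (P.erase (insert a t)) = P
    rw [← hBt]
    exact Finset.insert_erase hBP
  · -- right inverse
    intro Q hQ
    have hQsub : ∀ q ∈ Q, q ⊆ s \ t := fun q hq => block_subset hQ hq
    have hB'Q : insert a t ∉ Q := by
      intro h
      have := hQsub _ h (Finset.mem_insert_self a t)
      exact ha (Finset.mem_sdiff.1 this).1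
    exact Finset.erase_insert hB'Q
  · -- weights
    intro P hP
    obtain ⟨hPmem, hPt⟩ := Finset.mem_filter.1 hP
    obtain ⟨B, hBP, haB⟩ := exists_block hPmem (mem_insert_self a s)
    have hBeq : blockOf a P = B := blockOf_eq (mem_myParts.1 hPmem).2.1 hBP haB
    have hBt : B = insert a t := by
      rw [← hPt, hBeq, Finset.insert_erase haB]
    have hcard : (P.erase (insert a t)).card + 1 = P.card := by
      rw [← hBt]; exact Finset.card_erase_add_one hBP
    have hprod : ∏ J ∈ P, (J.card).factorial
        = (t.card + 1).factorial * ∏ J ∈ P.erase (insert a t), (J.card).factorial := by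
      rw [← hBt, ← Finset.mul_prod_erase P _ hBP, hBt,
        Finset.card_insert_of_notMem hat]
    show (P.card + j).factorial * ∏ J ∈ P, (J.card).factorial
        = (t.card + 1).factorial *
          (((P.erase (insert a t)).card + (j+1)).factorial *
            ∏ J ∈ P.erase (insert a t), (J.card).factorial)
    rw [hprod, ← hcard,
      show (P.erase (insert a t)).card + 1 + j = (P.erase (insert a t)).card + (j+1) from by ring]
    ring


lemma S_rec (m : ℕ) : ∑ i ∈ Finset.range (m+2), (i+1)*4^(m+1-i)
    = 4 * ∑ i ∈ Finset.range (m+1), (i+1)*4^(m-i) + (m+2) := by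
  rw [Finset.sum_range_succ]
  simp only [Nat.sub_self, pow_zero, mul_one]
  rw [Finset.mul_sum]
  congr 1
  refine Finset.sum_congr rfl fun i hi => ?_
  have hi' : i ≤ m := by have := Finset.mem_range.1 hi; omega
  have h : m + 1 - i = (m - i) + 1 := by omega
  rw [h, pow_succ]
  ring

lemma S_bound (m : ℕ) : 9 * (∑ i ∈ Finset.range (m+1), (i+1)*4^(m-i)) + (3*m + 7) ≤ 16 * 4^m := by
  induction m with
  | zero => simp
  | succ m ih =>
    have h := S_rec m
    calc 9 * (∑ i ∈ Finset.range (m+2), (i+1)*4^(m+1-i)) + (3*(m+1) + 7)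
        = 4 * (9 * (∑ i ∈ Finset.range (m+1), (i+1)*4^(m-i)) + (3*m + 7)) := by rw [h]; ring
      _ ≤ 4 * (16 * 4^m) := Nat.mul_le_mul_left 4 ih
      _ = 16 * 4^(m+1) := by ring

lemma S_le (m : ℕ) : (∑ i ∈ Finset.range (m+1), (i+1)*4^(m-i)) ≤ 4^(m+1) := by
  have h := S_bound m
  have h2 : 9 * (∑ i ∈ Finset.range (m+1), (i+1)*4^(m-i)) ≤ 9 * 4^(m+1) := by
    calc 9 * (∑ i ∈ Finset.range (m+1), (i+1)*4^(m-i)) ≤ 16 * 4^m := by omega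
      _ ≤ 9 * 4^(m+1) := by
          have : (16:ℕ) * 4^m ≤ 36 * 4^m := Nat.mul_le_mul_right _ (by norm_num)
          calc (16:ℕ) * 4^m ≤ 36 * 4^m := this
            _ = 9 * 4^(m+1) := by ring
  exact Nat.le_of_mul_le_mul_left h2 (by norm_num)

lemma key_num (m j : ℕ) :
    ∑ i ∈ Finset.range (m+1),
        m.choose i * ((i+1).factorial * ((m - i + (j+1)).factorial * 4^(m-i)))
      ≤ (m + 1 + j).factorial * 4^(m+1) := by
  have hterm : ∀ i ∈ Finset.range (m+1),
      m.choose i * ((i+1).factorial * ((m - i + (j+1)).factorial * 4^(m-i)))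
        ≤ (i+1) * (m+j+1).factorial * 4^(m-i) := by
    intro i hi
    have hi' : i ≤ m := by have := Finset.mem_range.1 hi; omega
    have h1 : m - i + (j+1) = (m+j+1) - i := by omega
    have h2 : m.choose i ≤ (m+j+1).choose i := Nat.choose_le_choose i (by omega)
    have h3 : (m+j+1).choose i * i.factorial * ((m+j+1) - i).factorial
        = (m+j+1).factorial := Nat.choose_mul_factorial_mul_factorial (by omega)
    calc m.choose i * ((i+1).factorial * ((m - i + (j+1)).factorial * 4^(m-i)))
        = (i+1) * (m.choose i * i.factorial * ((m+j+1) - i).factorial) * 4^(m-i) := by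
          rw [h1, Nat.factorial_succ]; ring
      _ ≤ (i+1) * ((m+j+1).choose i * i.factorial * ((m+j+1) - i).factorial) * 4^(m-i) := by
          have := Nat.mul_le_mul_right (i.factorial * ((m+j+1) - i).factorial) h2
          apply Nat.mul_le_mul_right
          apply Nat.mul_le_mul_left
          calc m.choose i * i.factorial * ((m + j + 1) - i).factorial
              = m.choose i * (i.factorial * ((m+j+1) - i).factorial) := by ring
            _ ≤ (m+j+1).choose i * (i.factorial * ((m+j+1) - i).factorial) := this.trans_eq (by ring)
            _ = (m+j+1).choose i * i.factorial * ((m+j+1) - i).factorial := by ring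
      _ = (i+1) * (m+j+1).factorial * 4^(m-i) := by rw [h3]
  calc ∑ i ∈ Finset.range (m+1),
          m.choose i * ((i+1).factorial * ((m - i + (j+1)).factorial * 4^(m-i)))
      ≤ ∑ i ∈ Finset.range (m+1), (i+1) * (m+j+1).factorial * 4^(m-i) :=
        Finset.sum_le_sum hterm
    _ = (m+j+1).factorial * ∑ i ∈ Finset.range (m+1), (i+1) * 4^(m-i) := by
        rw [Finset.mul_sum]; exact Finset.sum_congr rfl fun i _ => by ring
    _ ≤ (m+j+1).factorial * 4^(m+1) := Nat.mul_le_mul_left _ (S_le m)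
    _ = (m + 1 + j).factorial * 4^(m+1) := by rw [show m+j+1 = m+1+j by ring]


lemma W_le : ∀ (n : ℕ) (s : Finset α), s.card = n → ∀ j : ℕ,
    (∑ P ∈ myParts s, ((P.card + j).factorial * ∏ J ∈ P, (J.card).factorial))
      ≤ (s.card + j).factorial * 4^(s.card) := by
  intro n
  induction n using Nat.strong_induction_on with
  | _ n ih =>
    intro s hs j
    rcases Finset.eq_empty_or_nonempty s with rfl | ⟨a, ha⟩
    · simp [myParts_empty]
    · have hins : s = insert a (s.erase a) := (Finset.insert_erase ha).symm
      have hanotin : a ∉ s.erase a := Finset.notMem_erase a s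
      set s' := s.erase a with hs'
      have hcard' : s'.card + 1 = s.card := Finset.card_erase_add_one ha
      have hcardlt : s'.card < n := by omega
      rw [hins, sum_myParts_insert a s' hanotin j]
      have hbound : ∀ t ∈ s'.powerset,
          (t.card + 1).factorial *
              (∑ Q ∈ myParts (s' \ t), ((Q.card + (j+1)).factorial * ∏ J ∈ Q, (J.card).factorial))
            ≤ (t.card + 1).factorial *
              ((s'.card - t.card + (j+1)).factorial * 4^(s'.card - t.card)) := by
        intro t ht
        have hts : t ⊆ s' := Finset.mem_powerset.1 ht
        have hc : (s' \ t).card = s'.card - t.card := Finset.card_sdiff_of_subset hts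
        have hlt : (s' \ t).card < n := by
          have : (s' \ t).card ≤ s'.card := Finset.card_le_card (Finset.sdiff_subset)
          omega
        have h2 := ih _ hlt (s' \ t) rfl (j+1)
        rw [hc] at h2
        exact Nat.mul_le_mul_left _ h2
      calc ∑ t ∈ s'.powerset, (t.card + 1).factorial *
              (∑ Q ∈ myParts (s' \ t), ((Q.card + (j+1)).factorial * ∏ J ∈ Q, (J.card).factorial))
          ≤ ∑ t ∈ s'.powerset, (t.card + 1).factorial *
              ((s'.card - t.card + (j+1)).factorial * 4^(s'.card - t.card)) :=
            Finset.sum_le_sum hbound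
        _ = ∑ i ∈ Finset.range (s'.card + 1), s'.card.choose i *
              ((i + 1).factorial * ((s'.card - i + (j+1)).factorial * 4^(s'.card - i))) := by
            rw [Finset.sum_powerset s' (fun t =>
              (t.card + 1).factorial * ((s'.card - t.card + (j+1)).factorial * 4^(s'.card - t.card)))]
            refine Finset.sum_congr rfl fun i hi => ?_
            rw [Finset.sum_powersetCard i s' (fun c =>
              (c + 1).factorial * ((s'.card - c + (j+1)).factorial * 4^(s'.card - c)))]
            simp [smul_eq_mul]
        _ ≤ (s'.card + 1 + j).factorial * 4^(s'.card + 1) := key_num s'.card j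
        _ = ((insert a s').card + j).factorial * 4^((insert a s').card) := by
            rw [Finset.card_insert_of_notMem hanotin]

lemma W_le_univ (k : ℕ) :
    (∑ P ∈ myParts (Finset.univ : Finset (Fin k)),
      (P.card.factorial * ∏ J ∈ P, (J.card).factorial))
      ≤ k.factorial * 4 ^ k := by
  have h := W_le (Finset.univ : Finset (Fin k)).card (Finset.univ) rfl 0
  simp only [Nat.add_zero] at h
  rwa [Finset.card_univ, Fintype.card_fin] at h

end Combinatorics


lemma factorial_lower (n : ℕ) : ((n : ℝ) / Real.exp 1) ^ n ≤ (n.factorial : ℝ) := by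
  have h := Real.pow_div_factorial_le_exp (n : ℝ) (Nat.cast_nonneg n) n
  rw [div_le_iff₀ (by positivity)] at h
  rw [div_pow, div_le_iff₀ (by positivity)]
  calc (n:ℝ)^n ≤ Real.exp n * n.factorial := h
    _ = (n.factorial : ℝ) * Real.exp 1 ^ n := by
        rw [← Real.exp_one_rpow (n:ℝ), Real.rpow_natCast]; ring

-- sup bound : x^a e^{-x} ≤ a^a e^{-a}  (rpow)
lemma rpow_mul_exp_neg_le (x a : ℝ) (hx : 0 < x) (ha : 0 < a) :
    x ^ a * Real.exp (-x) ≤ a ^ a * Real.exp (-a) := by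
  rw [Real.rpow_def_of_pos hx, Real.rpow_def_of_pos ha, ← Real.exp_add, ← Real.exp_add]
  rw [Real.exp_le_exp]
  have hlog : Real.log (x / a) ≤ x / a - 1 := Real.log_le_sub_one_of_pos (by positivity)
  have h2 : a * Real.log (x / a) ≤ a * (x / a - 1) := by
    exact mul_le_mul_of_nonneg_left hlog ha.le
  rw [Real.log_div hx.ne' ha.ne'] at h2
  have h3 : a * (x / a - 1) = x - a := by field_simp
  nlinarith [h2, h3]

lemma tail_term_bound (θ L : ℝ) (hθ : 1 ≤ θ) (hL : 0 < L) (n : ℕ) (hn : 1 ≤ n)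
    (q : ℝ) (hq : 1 ≤ q) :
    ((q+1)*L)^n * (2*Real.exp (-q^(1/θ)))
      ≤ 2 * (2*L*((2*θ)^θ))^n * ((n.factorial : ℝ))^θ * Real.exp (-(q^(1/θ))/2) := by
  have hθ0 : (0:ℝ) < θ := lt_of_lt_of_le one_pos hθ
  have hq0 : (0:ℝ) < q := lt_of_lt_of_le one_pos hq
  set u := q^(1/θ) with hu
  have hu1 : 1 ≤ u := by
    have := Real.rpow_le_rpow (le_of_lt one_pos) hq (by positivity : (0:ℝ) ≤ 1/θ)
    rwa [Real.one_rpow] at this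
  have hu0 : 0 < u := lt_of_lt_of_le one_pos hu1
  have hsplit : Real.exp (-u) = Real.exp (-u/2) * Real.exp (-u/2) := by
    rw [← Real.exp_add]; ring_nf
  -- q^n = u ^ (θ * n)
  have hqn : (q:ℝ)^n = u ^ (θ * (n:ℝ)) := by
    rw [hu, ← Real.rpow_mul hq0.le]
    rw [show (1/θ) * (θ * (n:ℝ)) = (n:ℝ) by field_simp]
    rw [Real.rpow_natCast]
  have ha0 : 0 < θ * (n:ℝ) := by
    have : (0:ℝ) < n := by exact_mod_cast hn
    positivity
  -- u^(θn) * exp(-u/2) ≤ (2θn/e-ish)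
  have hkey : u ^ (θ * (n:ℝ)) * Real.exp (-u/2)
      ≤ ((2:ℝ)^θ)^n * ((θ^θ)^n * ((n.factorial : ℝ))^θ) := by
    have h1 : u ^ (θ * (n:ℝ)) = 2 ^ (θ*(n:ℝ)) * (u/2) ^ (θ*(n:ℝ)) := by
      rw [← Real.mul_rpow (by norm_num) (by positivity)]
      rw [show (2:ℝ) * (u/2) = u by ring]
    have h2 : (u/2) ^ (θ*(n:ℝ)) * Real.exp (-(u/2)) ≤ (θ*(n:ℝ)) ^ (θ*(n:ℝ)) * Real.exp (-(θ*(n:ℝ))) :=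
      rpow_mul_exp_neg_le (u/2) (θ*(n:ℝ)) (by positivity) ha0
    have h3 : (θ*(n:ℝ)) ^ (θ*(n:ℝ)) = θ ^ (θ*(n:ℝ)) * (n:ℝ) ^ (θ*(n:ℝ)) :=
      Real.mul_rpow hθ0.le (Nat.cast_nonneg n)
    have h4 : (n:ℝ) ^ (θ*(n:ℝ)) * Real.exp (-(θ*(n:ℝ))) ≤ ((n.factorial : ℝ))^θ := by
      have e1 : (n:ℝ) ^ (θ*(n:ℝ)) = ((n:ℝ)^(n:ℕ)) ^ θ := by
        rw [mul_comm, Real.rpow_mul (Nat.cast_nonneg n), Real.rpow_natCast]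
      have e2 : Real.exp (-(θ*(n:ℝ))) = (Real.exp (-(n:ℝ))) ^ θ := by
        rw [← Real.exp_mul]; ring_nf
      rw [e1, e2, ← Real.mul_rpow (by positivity) (Real.exp_pos _).le]
      apply Real.rpow_le_rpow (by positivity) _ hθ0.le
      have e3 : (n:ℝ)^(n:ℕ) * Real.exp (-(n:ℝ)) = ((n:ℝ)/Real.exp 1)^(n:ℕ) := by
        rw [Real.exp_neg, div_pow, ← Real.exp_one_pow]
        field_simp
      rw [e3]
      exact factorial_lower n
    have h5 : (2:ℝ) ^ (θ*(n:ℝ)) = ((2:ℝ)^θ)^n := by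
      rw [Real.rpow_mul (by norm_num : (0:ℝ) ≤ 2), Real.rpow_natCast]
    have h6 : θ ^ (θ*(n:ℝ)) = (θ^θ)^n := by
      rw [Real.rpow_mul hθ0.le, Real.rpow_natCast]
    calc u ^ (θ * (n:ℝ)) * Real.exp (-u/2)
        = 2 ^ (θ*(n:ℝ)) * ((u/2) ^ (θ*(n:ℝ)) * Real.exp (-(u/2))) := by
          rw [h1]; ring_nf
      _ ≤ 2 ^ (θ*(n:ℝ)) * ((θ*(n:ℝ)) ^ (θ*(n:ℝ)) * Real.exp (-(θ*(n:ℝ)))) := by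
          apply mul_le_mul_of_nonneg_left h2 (by positivity)
      _ = ((2:ℝ)^θ)^n * ((θ ^ (θ*(n:ℝ)) * ((n:ℝ) ^ (θ*(n:ℝ)) * Real.exp (-(θ*(n:ℝ)))))) := by
          rw [h3, h5]; ring
      _ ≤ ((2:ℝ)^θ)^n * (θ ^ (θ*(n:ℝ)) * ((n.factorial : ℝ))^θ) := by
          apply mul_le_mul_of_nonneg_left _ (by positivity)
          apply mul_le_mul_of_nonneg_left h4 (by positivity)
      _ = ((2:ℝ)^θ)^n * ((θ^θ)^n * ((n.factorial : ℝ))^θ) := by rw [h6]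
  -- assemble
  have hq1n : (q+1)^n ≤ 2^n * q^n := by
    rw [← mul_pow]
    exact pow_le_pow_left₀ (by positivity) (by linarith) n
  have hexp2 : (0:ℝ) < Real.exp (-u/2) := Real.exp_pos _
  calc ((q+1)*L)^n * (2*Real.exp (-u))
      = 2 * L^n * ((q+1)^n * Real.exp (-u/2)) * Real.exp (-u/2) := by
        rw [hsplit, mul_pow]; ring
    _ ≤ 2 * L^n * ((2^n * q^n) * Real.exp (-u/2)) * Real.exp (-u/2) := by
        have := mul_le_mul_of_nonneg_right hq1n hexp2.le
        apply mul_le_mul_of_nonneg_right _ hexp2.le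
        apply mul_le_mul_of_nonneg_left this (by positivity)
    _ = 2 * L^n * 2^n * (u ^ (θ * (n:ℝ)) * Real.exp (-u/2)) * Real.exp (-u/2) := by
        rw [← hqn]; ring
    _ ≤ 2 * L^n * 2^n * (((2:ℝ)^θ)^n * ((θ^θ)^n * ((n.factorial : ℝ))^θ)) * Real.exp (-u/2) := by
        apply mul_le_mul_of_nonneg_right _ hexp2.le
        apply mul_le_mul_of_nonneg_left hkey (by positivity)
    _ = 2 * (2*L*((2*θ)^θ))^n * ((n.factorial : ℝ))^θ * Real.exp (-(u)/2) := by
        rw [Real.mul_rpow (by norm_num : (0:ℝ) ≤ 2) hθ0.le]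
        rw [mul_pow, mul_pow, mul_pow]
        ring

lemma exp_tail_le (θ : ℝ) (hθ : 1 ≤ θ) (q : ℝ) (hq : 1 ≤ q) :
    Real.exp (-(q^(1/θ))/2)
      ≤ ((Nat.ceil (2*θ)).factorial : ℝ) * 2^(Nat.ceil (2*θ)) / q^2 := by
  have hθ0 : (0:ℝ) < θ := lt_of_lt_of_le one_pos hθ
  have hq0 : (0:ℝ) < q := lt_of_lt_of_le one_pos hq
  set m := Nat.ceil (2*θ) with hm
  set u := q^(1/θ) with hu
  have hu1 : 1 ≤ u := by
    have := Real.rpow_le_rpow (le_of_lt one_pos) hq (by positivity : (0:ℝ) ≤ 1/θ)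
    rwa [Real.one_rpow] at this
  have hu0 : 0 < u := lt_of_lt_of_le one_pos hu1
  have h1 : (u/2)^m / (m.factorial : ℝ) ≤ Real.exp (u/2) :=
    Real.pow_div_factorial_le_exp (u/2) (by positivity) m
  have hpos : (0:ℝ) < (u/2)^m / (m.factorial : ℝ) := by positivity
  have h2 : Real.exp (-(u)/2) ≤ (m.factorial : ℝ) * 2^m / u^m := by
    rw [show -(u)/2 = -(u/2) by ring, Real.exp_neg]
    rw [inv_le_iff_one_le_mul₀ (Real.exp_pos _)]
    rw [div_mul_eq_mul_div, le_div_iff₀ (by positivity)]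
    calc (1:ℝ) * u^m = ((u/2)^m / (m.factorial : ℝ)) * ((m.factorial : ℝ) * 2^m) := by
          field_simp [div_pow]; rw [← mul_pow, div_mul_cancel₀ u (by norm_num : (2:ℝ) ≠ 0)]
      _ ≤ Real.exp (u/2) * ((m.factorial : ℝ) * 2^m) := by
          apply mul_le_mul_of_nonneg_right h1 (by positivity)
      _ = (m.factorial : ℝ) * 2^m * Real.exp (u/2) := by ring
  refine h2.trans ?_
  apply div_le_div_of_nonneg_left (by positivity) (by positivity)
  -- q^2 ≤ u^m
  have e1 : u^m = q ^ ((1/θ) * (m:ℝ)) := by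
    rw [hu, ← Real.rpow_natCast (q^(1/θ)) m, ← Real.rpow_mul hq0.le]
  have e2 : (q:ℝ)^2 = q ^ ((2:ℕ):ℝ) := by rw [Real.rpow_natCast]
  rw [e1, e2]
  apply Real.rpow_le_rpow_of_exponent_le hq
  have hmge : 2*θ ≤ (m:ℝ) := Nat.le_ceil _
  rw [show (((2:ℕ)):ℝ) = (2:ℝ) by norm_num]
  rw [div_mul_eq_mul_div, le_div_iff₀ hθ0]
  linarith

lemma summable_tail (θ : ℝ) (hθ : 1 ≤ θ) :
    Summable (fun j : ℕ => Real.exp (-((((j:ℝ)+1))^(1/θ))/2)) := by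
  set C : ℝ := ((Nat.ceil (2*θ)).factorial : ℝ) * 2^(Nat.ceil (2*θ)) with hC
  have hsum : Summable (fun j : ℕ => C / ((j:ℝ)+1)^2) := by
    have h0 : Summable (fun n : ℕ => 1 / (n:ℝ) ^ 2) :=
      Real.summable_one_div_nat_pow.2 one_lt_two
    have h1 : Summable (fun n : ℕ => 1 / ((n+1:ℕ):ℝ) ^ 2) :=
      (summable_nat_add_iff (f := fun n : ℕ => 1 / (n:ℝ) ^ 2) 1).2 h0
    have h2 : Summable (fun n : ℕ => 1 / ((n:ℝ)+1) ^ 2) := by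
      have he : (fun n : ℕ => 1 / ((n:ℝ)+1)^2) = fun n : ℕ => 1 / ((n+1:ℕ):ℝ)^2 := by
        funext n; push_cast; ring
      rw [he]; exact h1
    have h3 := h2.mul_left C
    have he2 : (fun j : ℕ => C / ((j:ℝ)+1)^2) = fun j : ℕ => C * (1/((j:ℝ)+1)^2) := by
      funext j; ring
    rw [he2]; exact h3
  refine Summable.of_nonneg_of_le (fun j => (Real.exp_pos _).le) (fun j => ?_) hsum
  exact exp_tail_le θ hθ ((j:ℝ)+1) (by linarith [Nat.cast_nonneg (α := ℝ) j])

lemma moment_bound {Ω : Type*} [MeasurableSpace Ω] (μ : Measure Ω) [IsProbabilityMeasure μ]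
    (Y : Ω → ℝ) (hY : Measurable Y) (θ L : ℝ) (hθ : 1 ≤ θ) (hL : 0 < L)
    (hweib : ∀ x : ℝ, 0 ≤ x →
      (μ {ω | x < |Y ω|}).toReal ≤ 2 * Real.exp (-(x / L) ^ (1 / θ)))
    (n : ℕ) (hn : 1 ≤ n) :
    Integrable (fun ω => |Y ω| ^ n) μ ∧
      ∫ ω, |Y ω| ^ n ∂μ ≤ L^n + 2 * (2*L*((2*θ)^θ))^n * ((n.factorial:ℝ))^θ *
        (∑' j : ℕ, Real.exp (-((((j:ℝ)+1))^(1/θ))/2)) := by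
  set K : ℝ := ∑' j : ℕ, Real.exp (-((((j:ℝ)+1))^(1/θ))/2) with hK
  set A : ℝ := 2*L*((2*θ)^θ) with hA
  set c : ℝ := 2 * A^n * ((n.factorial:ℝ))^θ with hc
  have hθ0 : (0:ℝ) < θ := lt_of_lt_of_le one_pos hθ
  have hA0 : 0 < A := by
    have : (0:ℝ) < (2*θ)^θ := Real.rpow_pos_of_pos (by linarith) θ
    positivity
  have hc0 : 0 ≤ c := by positivity
  set S : ℕ → Set Ω := fun j => {ω | ((j:ℝ)+1)*L < |Y ω|} with hS
  have hSmeas : ∀ j, MeasurableSet (S j) := fun j =>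
    measurableSet_lt measurable_const hY.abs
  -- pointwise bound
  have hpt : ∀ ω, ENNReal.ofReal (|Y ω| ^ n) ≤
      ENNReal.ofReal (L^n) + ∑' j : ℕ,
        ENNReal.ofReal ((((j:ℝ)+2)*L)^n) * (S j).indicator (fun _ => (1:ENNReal)) ω := by
    intro ω
    by_cases h : |Y ω| ≤ L
    · have h1 : ENNReal.ofReal (|Y ω|^n) ≤ ENNReal.ofReal (L^n) :=
        ENNReal.ofReal_le_ofReal (pow_le_pow_left₀ (abs_nonneg _) h n)
      exact le_trans h1 le_self_add
    · push_neg at h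
      set r := |Y ω| / L with hr
      have hr1 : 1 < r := (one_lt_div hL).2 h
      set m := Nat.ceil r with hm
      have hm2 : 2 ≤ m := by
        have h2 : 1 < Nat.ceil r := (Nat.lt_ceil (n := 1)).2 (by push_cast; exact hr1)
        omega
      set j := m - 2 with hj
      have hcast : ((j:ℝ)) = (m:ℝ) - 2 := by
        rw [hj, Nat.cast_sub hm2]; norm_num
      have hYle : |Y ω| ≤ ((j:ℝ)+2)*L := by
        have h1 : r ≤ (m:ℝ) := Nat.le_ceil r
        rw [hr, div_le_iff₀ hL] at h1
        have : ((j:ℝ)+2) = (m:ℝ) := by rw [hcast]; ring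
        rw [this]; exact h1
      have hYgt : ω ∈ S j := by
        have h2 : (m:ℝ) < r + 1 := Nat.ceil_lt_add_one (by linarith)
        have h3 : ((j:ℝ)+1) < r := by rw [hcast]; linarith
        have h4 : ((j:ℝ)+1)*L < r * L := mul_lt_mul_of_pos_right h3 hL
        have h5 : r * L = |Y ω| := by rw [hr]; field_simp
        exact lt_of_lt_of_eq h4 h5
      have hind : (S j).indicator (fun _ => (1:ENNReal)) ω = 1 := Set.indicator_of_mem hYgt _
      calc ENNReal.ofReal (|Y ω|^n)
          ≤ ENNReal.ofReal ((((j:ℝ)+2)*L)^n) * (S j).indicator (fun _ => (1:ENNReal)) ω := by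
            rw [hind, mul_one]
            exact ENNReal.ofReal_le_ofReal (pow_le_pow_left₀ (abs_nonneg _) hYle n)
        _ ≤ ∑' i : ℕ, ENNReal.ofReal ((((i:ℝ)+2)*L)^n) * (S i).indicator (fun _ => (1:ENNReal)) ω :=
            ENNReal.le_tsum j
        _ ≤ _ := le_add_self
  -- lintegral bound
  have hlin : ∫⁻ ω, ENNReal.ofReal (|Y ω| ^ n) ∂μ ≤
      ENNReal.ofReal (L^n) + ∑' j : ℕ, ENNReal.ofReal ((((j:ℝ)+2)*L)^n) * μ (S j) := by
    calc ∫⁻ ω, ENNReal.ofReal (|Y ω| ^ n) ∂μ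
        ≤ ∫⁻ ω, (ENNReal.ofReal (L^n) + ∑' j : ℕ,
            ENNReal.ofReal ((((j:ℝ)+2)*L)^n) * (S j).indicator (fun _ => (1:ENNReal)) ω) ∂μ :=
          lintegral_mono hpt
      _ = ENNReal.ofReal (L^n) + ∫⁻ ω, (∑' j : ℕ,
            ENNReal.ofReal ((((j:ℝ)+2)*L)^n) * (S j).indicator (fun _ => (1:ENNReal)) ω) ∂μ := by
          rw [lintegral_add_left measurable_const, lintegral_const, measure_univ, mul_one]
      _ = ENNReal.ofReal (L^n) + ∑' j : ℕ, ∫⁻ ω,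
            ENNReal.ofReal ((((j:ℝ)+2)*L)^n) * (S j).indicator (fun _ => (1:ENNReal)) ω ∂μ := by
          rw [lintegral_tsum (fun j => ((measurable_const.indicator (hSmeas j)).const_mul _).aemeasurable)]
      _ = ENNReal.ofReal (L^n) + ∑' j : ℕ, ENNReal.ofReal ((((j:ℝ)+2)*L)^n) * μ (S j) := by
          congr 1
          refine tsum_congr fun j => ?_
          rw [lintegral_const_mul _ (measurable_const.indicator (hSmeas j))]
          congr 1
          exact lintegral_indicator_one (hSmeas j)
  -- tail measure bound
  have hμS : ∀ j : ℕ, μ (S j) ≤ ENNReal.ofReal (2 * Real.exp (-(((j:ℝ)+1))^(1/θ))) := by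
    intro j
    have hx : (0:ℝ) ≤ ((j:ℝ)+1)*L := by positivity
    have h := hweib (((j:ℝ)+1)*L) hx
    rw [show (((j:ℝ)+1)*L)/L = ((j:ℝ)+1) from by field_simp] at h
    calc μ (S j) = ENNReal.ofReal ((μ (S j)).toReal) :=
          (ENNReal.ofReal_toReal (measure_ne_top μ _)).symm
      _ ≤ ENNReal.ofReal (2 * Real.exp (-(((j:ℝ)+1))^(1/θ))) := ENNReal.ofReal_le_ofReal h
  -- termwise bound
  have hterm : ∀ j : ℕ, ENNReal.ofReal ((((j:ℝ)+2)*L)^n) * μ (S j)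
      ≤ ENNReal.ofReal (c * Real.exp (-((((j:ℝ)+1))^(1/θ))/2)) := by
    intro j
    have hq1 : (1:ℝ) ≤ (j:ℝ)+1 := by
      have := Nat.cast_nonneg (α := ℝ) j; linarith
    have htb := tail_term_bound θ L hθ hL n hn ((j:ℝ)+1) hq1
    calc ENNReal.ofReal ((((j:ℝ)+2)*L)^n) * μ (S j)
        ≤ ENNReal.ofReal ((((j:ℝ)+2)*L)^n) *
            ENNReal.ofReal (2 * Real.exp (-(((j:ℝ)+1))^(1/θ))) := mul_le_mul_right (hμS j) _
      _ = ENNReal.ofReal ((((j:ℝ)+2)*L)^n * (2 * Real.exp (-(((j:ℝ)+1))^(1/θ)))) :=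
          (ENNReal.ofReal_mul (by positivity)).symm
      _ ≤ ENNReal.ofReal (c * Real.exp (-((((j:ℝ)+1))^(1/θ))/2)) := by
          apply ENNReal.ofReal_le_ofReal
          have he : (((j:ℝ)+2)*L)^n = ((((j:ℝ)+1)+1)*L)^n := by ring_nf
          rw [he]
          calc ((((j:ℝ)+1)+1)*L)^n * (2 * Real.exp (-(((j:ℝ)+1))^(1/θ))) ≤
              2 * A^n * ((n.factorial : ℝ))^θ * Real.exp (-((((j:ℝ)+1))^(1/θ))/2) := htb
            _ = c * Real.exp (-((((j:ℝ)+1))^(1/θ))/2) := by rw [hc]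
  -- tsum bound
  have htsum : ∑' j : ℕ, ENNReal.ofReal ((((j:ℝ)+2)*L)^n) * μ (S j) ≤ ENNReal.ofReal (c * K) := by
    calc ∑' j : ℕ, ENNReal.ofReal ((((j:ℝ)+2)*L)^n) * μ (S j)
        ≤ ∑' j : ℕ, ENNReal.ofReal (c * Real.exp (-((((j:ℝ)+1))^(1/θ))/2)) :=
          ENNReal.tsum_le_tsum hterm
      _ = ∑' j : ℕ, ENNReal.ofReal c * ENNReal.ofReal (Real.exp (-((((j:ℝ)+1))^(1/θ))/2)) := by
          refine tsum_congr fun j => ?_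
          rw [ENNReal.ofReal_mul hc0]
      _ = ENNReal.ofReal c * ∑' j : ℕ, ENNReal.ofReal (Real.exp (-((((j:ℝ)+1))^(1/θ))/2)) :=
          ENNReal.tsum_mul_left
      _ = ENNReal.ofReal c * ENNReal.ofReal K := by
          rw [hK, ENNReal.ofReal_tsum_of_nonneg (fun j => (Real.exp_pos _).le) (summable_tail θ hθ)]
      _ = ENNReal.ofReal (c * K) := (ENNReal.ofReal_mul hc0).symm
  have hfinal : ∫⁻ ω, ENNReal.ofReal (|Y ω| ^ n) ∂μ ≤ ENNReal.ofReal (L^n + c * K) := by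
    calc ∫⁻ ω, ENNReal.ofReal (|Y ω| ^ n) ∂μ
        ≤ ENNReal.ofReal (L^n) + ∑' j : ℕ, ENNReal.ofReal ((((j:ℝ)+2)*L)^n) * μ (S j) := hlin
      _ ≤ ENNReal.ofReal (L^n) + ENNReal.ofReal (c * K) := add_le_add_right htsum _
      _ = ENNReal.ofReal (L^n + c * K) := by
          rw [ENNReal.ofReal_add (by positivity) ?_]
          have hK0 : 0 ≤ K := tsum_nonneg (fun j => (Real.exp_pos _).le)
          positivity
  have hmeas : AEStronglyMeasurable (fun ω => |Y ω| ^ n) μ :=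
    ((hY.abs.pow_const n).aestronglyMeasurable)
  have hint : Integrable (fun ω => |Y ω| ^ n) μ := by
    refine ⟨hmeas, ?_⟩
    rw [hasFiniteIntegral_iff_ofReal (Filter.Eventually.of_forall fun ω => by positivity)]
    exact lt_of_le_of_lt hfinal ENNReal.ofReal_lt_top
  refine ⟨hint, ?_⟩
  have hval : ∫ ω, |Y ω| ^ n ∂μ = (∫⁻ ω, ENNReal.ofReal (|Y ω| ^ n) ∂μ).toReal :=
    integral_eq_lintegral_of_nonneg_ae (Filter.Eventually.of_forall fun ω => by positivity) hmeas
  rw [hval]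
  have hK0 : 0 ≤ K := tsum_nonneg (fun j => (Real.exp_pos _).le)
  have hrhs : L^n + c * K = L^n + 2 * A^n * ((n.factorial:ℝ))^θ * K := by rw [hc]
  rw [← hrhs]
  exact ENNReal.toReal_le_of_le_ofReal (by positivity) hfinal

lemma real_rpow_add_le {a b p : ℝ} (ha : 0 ≤ a) (hb : 0 ≤ b) (hp : 1 ≤ p) :
    a ^ p + b ^ p ≤ (a + b) ^ p := by
  lift a to NNReal using ha
  lift b to NNReal using hb
  have h := NNReal.add_rpow_le_rpow_add a b hp
  exact_mod_cast h

lemma sum_rpow_le {ι : Type*} (s : Finset ι) (f : ι → ℝ) (hf : ∀ i ∈ s, 0 ≤ f i)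
    {p : ℝ} (hp : 1 ≤ p) : ∑ i ∈ s, (f i) ^ p ≤ (∑ i ∈ s, f i) ^ p := by
  induction s using Finset.cons_induction with
  | empty => simp [Real.zero_rpow (by positivity : p ≠ 0)]
  | cons a s ha ih =>
    rw [Finset.sum_cons, Finset.sum_cons]
    have hfa := hf a (Finset.mem_cons_self a s)
    have hsum : 0 ≤ ∑ i ∈ s, f i :=
      Finset.sum_nonneg fun i hi => hf i (Finset.mem_cons_of_mem hi)
    calc f a ^ p + ∑ i ∈ s, f i ^ p
        ≤ f a ^ p + (∑ i ∈ s, f i) ^ p :=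
          add_le_add_right (ih fun i hi => hf i (Finset.mem_cons_of_mem hi)) _
      _ ≤ (f a + ∑ i ∈ s, f i) ^ p := real_rpow_add_le hfa hsum hp

lemma cumulant_le {Ω : Type*} [MeasurableSpace Ω] (μ : Measure Ω) [IsProbabilityMeasure μ]
    (Y : Ω → ℝ) (θ C₀ : ℝ) (hθ : 1 ≤ θ) (hC : 1 ≤ C₀)
    (hm : ∀ n : ℕ, 1 ≤ n → |∫ ω, (Y ω) ^ n ∂μ| ≤ C₀ ^ n * ((n.factorial : ℝ)) ^ θ)
    (k : ℕ) :
    |cumulantK μ k Y| ≤ (C₀ * (4:ℝ) ^ θ) ^ k * ((k.factorial : ℝ)) ^ θ := by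
  have hθ0 : (0:ℝ) < θ := lt_of_lt_of_le one_pos hθ
  have hC0 : (0:ℝ) < C₀ := lt_of_lt_of_le one_pos hC
  have hEq : ((Finset.univ : Finset (Fin k)).powerset.powerset.filter fun P =>
      (∀ s ∈ P, s.Nonempty) ∧ (∀ s ∈ P, ∀ t ∈ P, s ≠ t → Disjoint s t) ∧
        P.sup id = Finset.univ) = myParts (Finset.univ : Finset (Fin k)) := by
    ext P
    rw [myParts]
    simp only [Finset.mem_filter]
  rw [cumulantK, hEq]
  have hsumcard : ∀ P ∈ myParts (Finset.univ : Finset (Fin k)), ∑ J ∈ P, J.card = k := by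
    intro P hP
    obtain ⟨_, hdisj, hsup⟩ := mem_myParts.1 hP
    calc ∑ J ∈ P, J.card = ∑ J ∈ P, (id J).card := rfl
      _ = (P.biUnion id).card :=
        (Finset.card_biUnion fun x hx y hy hxy => hdisj x hx y hy hxy).symm
      _ = (P.sup id).card := by rw [Finset.sup_eq_biUnion]
      _ = k := by rw [hsup, Finset.card_univ, Fintype.card_fin]
  have hterm : ∀ P ∈ myParts (Finset.univ : Finset (Fin k)),
      |(-1 : ℝ) ^ (P.card - 1) * (Nat.factorial (P.card - 1) : ℝ) *
        ∏ J ∈ P, ∫ ω, (Y ω) ^ J.card ∂μ|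
      ≤ C₀ ^ k * (((P.card.factorial * ∏ J ∈ P, (J.card).factorial : ℕ)) : ℝ) ^ θ := by
    intro P hP
    obtain ⟨hne, hdisj, hsup⟩ := mem_myParts.1 hP
    have habs : |(-1 : ℝ) ^ (P.card - 1) * (Nat.factorial (P.card - 1) : ℝ) *
        ∏ J ∈ P, ∫ ω, (Y ω) ^ J.card ∂μ|
        = (Nat.factorial (P.card - 1) : ℝ) * ∏ J ∈ P, |∫ ω, (Y ω) ^ J.card ∂μ| := by
      rw [abs_mul, abs_mul, abs_pow, abs_neg, abs_one, one_pow, one_mul,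
        abs_of_nonneg (by positivity : (0:ℝ) ≤ (Nat.factorial (P.card - 1) : ℝ)),
        Finset.abs_prod]
    rw [habs]
    have hprodle : ∏ J ∈ P, |∫ ω, (Y ω) ^ J.card ∂μ|
        ≤ ∏ J ∈ P, (C₀ ^ J.card * ((J.card.factorial : ℝ)) ^ θ) := by
      refine Finset.prod_le_prod (fun J _ => abs_nonneg _) fun J hJ => ?_
      exact hm J.card (Finset.card_pos.2 (hne J hJ))
    have hprodeq : ∏ J ∈ P, (C₀ ^ J.card * ((J.card.factorial : ℝ)) ^ θ)
        = C₀ ^ k * ∏ J ∈ P, ((J.card.factorial : ℝ)) ^ θ := by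
      rw [Finset.prod_mul_distrib, Finset.prod_pow_eq_pow_sum, hsumcard P hP]
    have hX : ∏ J ∈ P, ((J.card.factorial : ℝ)) ^ θ
        = (∏ J ∈ P, ((J.card.factorial : ℝ))) ^ θ := by
      rw [← Real.finset_prod_rpow P _ (fun J _ => by positivity) θ]
    have hXpos : (0:ℝ) ≤ ∏ J ∈ P, ((J.card.factorial : ℝ)) :=
      Finset.prod_nonneg fun J _ => by positivity
    have hfac1 : (Nat.factorial (P.card - 1) : ℝ) ≤ ((P.card.factorial : ℕ) : ℝ) := by
      exact_mod_cast Nat.factorial_le (Nat.sub_le _ 1)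
    have hfac2 : ((P.card.factorial : ℕ) : ℝ) ≤ ((P.card.factorial : ℕ) : ℝ) ^ θ := by
      nth_rewrite 1 [← Real.rpow_one ((P.card.factorial : ℕ) : ℝ)]
      exact Real.rpow_le_rpow_of_exponent_le
        (by exact_mod_cast Nat.one_le_iff_ne_zero.2 (Nat.factorial_ne_zero _)) hθ
    calc (Nat.factorial (P.card - 1) : ℝ) * ∏ J ∈ P, |∫ ω, (Y ω) ^ J.card ∂μ|
        ≤ (Nat.factorial (P.card - 1) : ℝ) *
            (C₀ ^ k * ∏ J ∈ P, ((J.card.factorial : ℝ)) ^ θ) := by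
          rw [← hprodeq]
          exact mul_le_mul_of_nonneg_left hprodle (by positivity)
      _ = C₀ ^ k * ((Nat.factorial (P.card - 1) : ℝ) *
            (∏ J ∈ P, ((J.card.factorial : ℝ))) ^ θ) := by rw [hX]; ring
      _ ≤ C₀ ^ k * (((P.card.factorial : ℕ) : ℝ) ^ θ *
            (∏ J ∈ P, ((J.card.factorial : ℝ))) ^ θ) := by
          apply mul_le_mul_of_nonneg_left _ (by positivity)
          apply mul_le_mul_of_nonneg_right (hfac1.trans hfac2) (by positivity)
      _ = C₀ ^ k * (((P.card.factorial * ∏ J ∈ P, (J.card).factorial : ℕ)) : ℝ) ^ θ := by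
          rw [← Real.mul_rpow (by positivity) hXpos]
          congr 2
          push_cast
          ring
  calc |∑ P ∈ myParts (Finset.univ : Finset (Fin k)),
          (-1 : ℝ) ^ (P.card - 1) * (Nat.factorial (P.card - 1) : ℝ) *
            ∏ J ∈ P, ∫ ω, (Y ω) ^ J.card ∂μ|
      ≤ ∑ P ∈ myParts (Finset.univ : Finset (Fin k)),
          |(-1 : ℝ) ^ (P.card - 1) * (Nat.factorial (P.card - 1) : ℝ) *
            ∏ J ∈ P, ∫ ω, (Y ω) ^ J.card ∂μ| := Finset.abs_sum_le_sum_abs _ _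
    _ ≤ ∑ P ∈ myParts (Finset.univ : Finset (Fin k)),
          C₀ ^ k * (((P.card.factorial * ∏ J ∈ P, (J.card).factorial : ℕ)) : ℝ) ^ θ :=
        Finset.sum_le_sum hterm
    _ = C₀ ^ k * ∑ P ∈ myParts (Finset.univ : Finset (Fin k)),
          (((P.card.factorial * ∏ J ∈ P, (J.card).factorial : ℕ)) : ℝ) ^ θ := by
        rw [Finset.mul_sum]
    _ ≤ C₀ ^ k * (∑ P ∈ myParts (Finset.univ : Finset (Fin k)),
          (((P.card.factorial * ∏ J ∈ P, (J.card).factorial : ℕ)) : ℝ)) ^ θ := by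
        apply mul_le_mul_of_nonneg_left _ (by positivity)
        exact sum_rpow_le _ _ (fun P _ => by positivity) hθ
    _ ≤ C₀ ^ k * (((k.factorial * 4 ^ k : ℕ)) : ℝ) ^ θ := by
        apply mul_le_mul_of_nonneg_left _ (by positivity)
        apply Real.rpow_le_rpow (Finset.sum_nonneg fun P _ => by positivity) _ hθ0.le
        rw [← Nat.cast_sum]
        exact_mod_cast W_le_univ k
    _ = (C₀ * (4:ℝ) ^ θ) ^ k * ((k.factorial : ℝ)) ^ θ := by
        have h4 : ((4:ℝ) ^ k) ^ θ = ((4:ℝ) ^ θ) ^ k := by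
          rw [← Real.rpow_natCast (4:ℝ) k, ← Real.rpow_mul (by norm_num), mul_comm,
            Real.rpow_mul (by norm_num), Real.rpow_natCast]
        rw [Nat.cast_mul, Nat.cast_pow,
          Real.mul_rpow (by positivity) (by positivity)]
        push_cast
        rw [h4]
        ring

theorem stmt17 {Ω : Type*} [MeasurableSpace Ω] (μ : Measure Ω) [IsProbabilityMeasure μ]
    (Y : Ω → ℝ) (hY : Measurable Y) (θ L : ℝ) (hθ : 1 ≤ θ) (hL : 0 < L)
    -- `Y` is sub-Weibull with tail parameter `θ` and scale `L`:
    (hweib : ∀ x : ℝ, 0 ≤ x →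
      (μ {ω | x < |Y ω|}).toReal ≤ 2 * Real.exp (-(x / L) ^ (1 / θ))) :
    (∀ k : ℕ, Integrable (fun ω => |Y ω| ^ k) μ) ∧
    ∃ Δ : ℝ, 0 < Δ ∧ ∀ k : ℕ, 3 ≤ k →
      |cumulantK μ k Y| ≤ Δ ^ (k - 2) * (Nat.factorial k : ℝ) ^ θ := by
  have hθ0 : (0:ℝ) < θ := lt_of_lt_of_le one_pos hθ
  have hK0 : 0 ≤ ∑' j : ℕ, Real.exp (-((((j:ℝ)+1))^(1/θ))/2) :=
    tsum_nonneg fun j => (Real.exp_pos _).le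
  set K : ℝ := ∑' j : ℕ, Real.exp (-((((j:ℝ)+1))^(1/θ))/2) with hKdef
  have hA0 : (0:ℝ) < 2*L*((2*θ)^θ) := by
    have : (0:ℝ) < (2*θ)^θ := Real.rpow_pos_of_pos (by linarith) θ
    positivity
  set A : ℝ := 2*L*((2*θ)^θ) with hAdef
  -- integrability
  have hint : ∀ k : ℕ, Integrable (fun ω => |Y ω| ^ k) μ := by
    intro k
    rcases Nat.eq_zero_or_pos k with rfl | hk
    · have he : (fun ω => |Y ω| ^ 0) = fun _ : Ω => (1:ℝ) := by
        funext ω; simp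
      rw [he]
      exact integrable_const 1
    · exact (moment_bound μ Y hY θ L hθ hL hweib k hk).1
  refine ⟨hint, ?_⟩
  set C₀ : ℝ := (1+2*K)*(1+L+A) with hC₀def
  have hC₀1 : (1:ℝ) ≤ C₀ := by
    have h1 : (1:ℝ) ≤ 1+2*K := by linarith
    have h2 : (1:ℝ) ≤ 1+L+A := by linarith
    nlinarith
  have hmom : ∀ n : ℕ, 1 ≤ n → |∫ ω, (Y ω) ^ n ∂μ| ≤ C₀ ^ n * ((n.factorial : ℝ)) ^ θ := by
    intro n hn
    have h1 : |∫ ω, (Y ω) ^ n ∂μ| ≤ ∫ ω, |Y ω| ^ n ∂μ := by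
      have h1a : |∫ ω, (Y ω) ^ n ∂μ| ≤ ∫ ω, |(Y ω) ^ n| ∂μ := by
        simpa [Real.norm_eq_abs] using
          norm_integral_le_integral_norm (μ := μ) (f := fun ω => (Y ω) ^ n)
      have h1b : (fun ω => |(Y ω) ^ n|) = fun ω => |Y ω| ^ n := by
        funext ω; rw [abs_pow]
      rwa [h1b] at h1a
    have h2 := (moment_bound μ Y hY θ L hθ hL hweib n hn).2
    have hfθ : (1:ℝ) ≤ ((n.factorial:ℝ))^θ := by
      have hcast : (1:ℝ) ≤ (n.factorial:ℝ) := by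
        exact_mod_cast Nat.one_le_iff_ne_zero.2 (Nat.factorial_ne_zero n)
      have := Real.rpow_le_rpow (le_of_lt one_pos) hcast hθ0.le
      rwa [Real.one_rpow] at this
    have hfθ0 : (0:ℝ) ≤ ((n.factorial:ℝ))^θ := by linarith
    have h4 : L^n + 2*K*A^n ≤ C₀^n := by
      have hL' : L^n ≤ (1+L+A)^n := pow_le_pow_left₀ hL.le (by linarith) n
      have hA' : A^n ≤ (1+L+A)^n := pow_le_pow_left₀ hA0.le (by linarith) n
      have h5 : (1+2*K) ≤ (1+2*K)^n := le_self_pow₀ (by linarith) (by omega)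
      have h6 : (0:ℝ) ≤ (1+L+A)^n := by positivity
      calc L^n + 2*K*A^n ≤ (1+2*K) * (1+L+A)^n := by nlinarith
        _ ≤ (1+2*K)^n * (1+L+A)^n := mul_le_mul_of_nonneg_right h5 h6
        _ = C₀^n := (mul_pow _ _ n).symm
    have h3 : L^n + 2 * A^n * ((n.factorial:ℝ))^θ * K ≤ C₀^n * ((n.factorial:ℝ))^θ := by
      have hLn : L^n ≤ L^n * ((n.factorial:ℝ))^θ :=
        le_mul_of_one_le_right (pow_nonneg hL.le n) hfθ
      calc L^n + 2 * A^n * ((n.factorial:ℝ))^θ * K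
          ≤ (L^n + 2*K*A^n) * ((n.factorial:ℝ))^θ := by nlinarith [pow_nonneg hA0.le n]
        _ ≤ C₀^n * ((n.factorial:ℝ))^θ := mul_le_mul_of_nonneg_right h4 hfθ0
    exact h1.trans (h2.trans h3)
  set B : ℝ := max 1 (C₀ * (4:ℝ)^θ) with hBdef
  have hB1 : (1:ℝ) ≤ B := le_max_left _ _
  have hB0 : (0:ℝ) < B := lt_of_lt_of_le one_pos hB1
  refine ⟨B^3, by positivity, fun k hk => ?_⟩
  have h6 := cumulant_le μ Y θ C₀ hθ hC₀1 hmom k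
  have hfθ0 : (0:ℝ) ≤ ((k.factorial:ℝ))^θ := Real.rpow_nonneg (Nat.cast_nonneg _) θ
  have hC4 : (0:ℝ) ≤ C₀ * (4:ℝ)^θ := by
    have : (0:ℝ) < (4:ℝ)^θ := Real.rpow_pos_of_pos (by norm_num) θ
    nlinarith
  calc |cumulantK μ k Y| ≤ (C₀ * (4:ℝ)^θ)^k * ((k.factorial:ℝ))^θ := h6
    _ ≤ B^k * ((k.factorial:ℝ))^θ :=
        mul_le_mul_of_nonneg_right (pow_le_pow_left₀ hC4 (le_max_right _ _) k) hfθ0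
    _ ≤ (B^3)^(k-2) * ((k.factorial:ℝ))^θ := by
        apply mul_le_mul_of_nonneg_right _ hfθ0
        rw [← pow_mul]
        exact pow_le_pow_right₀ hB1 (by omega)
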